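/- Let R̃ = HZ(Gc, Gb, c, Ac, Ab, b) be a hybrid zonotope in ℝ^n. For each sensor j = 1, …, q, let C^j ∈ ℝ^{p_j×n} admit a decomposition C^j = P₁^j Σ^j (V₁^j)ᵀ with P₁^j ∈ ℝ^{p_j×p_j} orthogonal, Σ^j ∈ ℝ^{p_j×p_j} invertible, V₁^j ∈ ℝ^{n×p_j} with (V₁^j)ᵀV₁^j = I, and V₂^j ∈ ℝ^{n×(n−p_j)} with (V₁^j)ᵀV₂^j = 0; let y^j ∈ ℝ^{p_j}, noise zonotope Z(c_{v,j}, G_{v,j}) with G_{v,j} ∈ ℝ^{p_j×n_{v,j}}, scalars M_j > 0, and define c_{x|y^j} = V₁^j(Σ^j)⁻¹(P₁^j)ᵀ(y^j − c_{v,j}) and G_{x|y^j} = [V₁^j(Σ^j)⁻¹(P₁^j)ᵀG_{v,j} M_j·V₂^j]. Then for arbitrary weight matrices λ^j ∈ ℝ^{n×p_j}, the RM set R̃ ∩ (⋂_{j=1}^q Z(c_{x|y^j}, G_{x|y^j})) is contained in the IN hybrid zonotope HZ(Ĝc, Ĝb, ĉ, Âc, Âb, b̂) defined by ĉ = c + Σ_{j=1}^q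 λ^j (y^j − C^j c − c_{v,j}), Ĝc = [(I − Σ_j λ^j C^j) Gc, −λ^1 G_{v,1}, …, −λ^q G_{v,q}], Ĝb = (I − Σ_j λ^j C^j) Gb, Âc = [Ac, 0, …, 0], Âb = Ab, b̂ = b. -/

import Mathlib

open Matrix

/-- The hybrid zonotope `HZ(Gc, Gb, c, Ac, Ab, b)`:
the set `{Gc ξc + Gb ξb + c : ξc ∈ [-1,1]^{ng}, ξb ∈ {-1,1}^{nb}, Ac ξc + Ab ξb = b}`. -/
def HZ {n ng nb nc : Type*} [Fintype ng] [Fintype nb] [Fintype nc]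
    (Gc : Matrix n ng ℝ) (Gb : Matrix n nb ℝ) (c : n → ℝ)
    (Ac : Matrix nc ng ℝ) (Ab : Matrix nc nb ℝ) (b : nc → ℝ) : Set (n → ℝ) :=
  {x | ∃ ξc : ng → ℝ, ∃ ξb : nb → ℝ,
    (∀ i, |ξc i| ≤ 1) ∧ (∀ i, ξb i = 1 ∨ ξb i = -1) ∧
    Ac *ᵥ ξc + Ab *ᵥ ξb = b ∧ x = Gc *ᵥ ξc + Gb *ᵥ ξb + c}

/-- The zonotope `Z(c, G) = {c + Gξ : ξ ∈ [-1,1]^p}`. -/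
def Zono {n p : Type*} [Fintype p] (c : n → ℝ) (G : Matrix n p ℝ) : Set (n → ℝ) :=
  {x | ∃ ξ : p → ℝ, (∀ i, |ξ i| ≤ 1) ∧ x = c + G *ᵥ ξ}

lemma sum_mulVec' {ι m n : Type*} [Fintype n] (s : Finset ι) (A : ι → Matrix m n ℝ) (v : n → ℝ) :
    (∑ j ∈ s, A j) *ᵥ v = ∑ j ∈ s, A j *ᵥ v := by
  induction s using Finset.cons_induction with
  | empty => simp [Matrix.zero_mulVec]
  | cons a s ha ih => simp [Finset.sum_cons, Matrix.add_mulVec, ih]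

lemma sigma_mulVec {q : ℕ} {m : Type*} (nv : Fin q → ℕ)
    (B : ∀ j, Matrix m (Fin (nv j)) ℝ) (v : (j : Fin q) × Fin (nv j) → ℝ) :
    (Matrix.of fun i (a : (j : Fin q) × Fin (nv j)) => -((B a.1) i a.2)) *ᵥ v
      = -∑ j, (B j) *ᵥ (fun k => v ⟨j, k⟩) := by
  funext i
  simp only [Matrix.mulVec, dotProduct, Matrix.of_apply,
    Pi.neg_apply, Finset.sum_apply]
  rw [show (Finset.univ : Finset ((j : Fin q) × Fin (nv j)))
      = (Finset.univ : Finset (Fin q)).sigma (fun _ => Finset.univ) by rfl,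
    Finset.sum_sigma]
  simp [neg_mul, Finset.sum_neg_distrib]

/-- RM ⊆ IN: the intersection of the predicted hybrid zonotope with all
reverse-mapping measurement zonotopes is contained in the implicit-intersection
(IN) hybrid zonotope, for arbitrary weight matrices `λ^j`. -/
theorem RM_subset_IN {n ng nb nc q : ℕ}
    (Gc : Matrix (Fin n) (Fin ng) ℝ) (Gb : Matrix (Fin n) (Fin nb) ℝ) (c : Fin n → ℝ)
    (Ac : Matrix (Fin nc) (Fin ng) ℝ) (Ab : Matrix (Fin nc) (Fin nb) ℝ) (b : Fin nc → ℝ)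
    (p nv : Fin q → ℕ)
    (C : ∀ j, Matrix (Fin (p j)) (Fin n) ℝ)
    (P1 Sg : ∀ j, Matrix (Fin (p j)) (Fin (p j)) ℝ)
    (V1 : ∀ j, Matrix (Fin n) (Fin (p j)) ℝ)
    (V2 : ∀ j, Matrix (Fin n) (Fin (n - p j)) ℝ)
    (hP1 : ∀ j, (P1 j)ᵀ * P1 j = 1) (hP1' : ∀ j, P1 j * (P1 j)ᵀ = 1)
    (hSg : ∀ j, IsUnit (Sg j).det)
    (hV1 : ∀ j, (V1 j)ᵀ * V1 j = 1) (hV12 : ∀ j, (V1 j)ᵀ * V2 j = 0)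
    (hC : ∀ j, C j = P1 j * Sg j * (V1 j)ᵀ)
    (y : ∀ j, Fin (p j) → ℝ) (cv : ∀ j, Fin (p j) → ℝ)
    (Gv : ∀ j, Matrix (Fin (p j)) (Fin (nv j)) ℝ)
    (M : Fin q → ℝ) (hM : ∀ j, 0 < M j)
    (cxy : ∀ j, Fin n → ℝ)
    (hcxy : ∀ j, cxy j = (V1 j * (Sg j)⁻¹ * (P1 j)ᵀ) *ᵥ (y j - cv j))
    (Gxy : ∀ j, Matrix (Fin n) (Fin (nv j) ⊕ Fin (n - p j)) ℝ)
    (hGxy : ∀ j, Gxy j = fromCols (V1 j * (Sg j)⁻¹ * (P1 j)ᵀ * Gv j) (M j • V2 j))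
    (lam : ∀ j, Matrix (Fin n) (Fin (p j)) ℝ) :
    HZ Gc Gb c Ac Ab b ∩ (⋂ j, Zono (cxy j) (Gxy j))
      ⊆ HZ
          (fromCols ((1 - ∑ j, lam j * C j) * Gc)
            (Matrix.of fun i (a : (j : Fin q) × Fin (nv j)) => -((lam a.1 * Gv a.1) i a.2)))
          ((1 - ∑ j, lam j * C j) * Gb)
          (c + ∑ j, lam j *ᵥ (y j - C j *ᵥ c - cv j))
          (fromCols Ac (0 : Matrix (Fin nc) ((j : Fin q) × Fin (nv j)) ℝ))
          Ab b := by
  rintro x ⟨⟨ξc, ξb, hξc, hξb, hcon, hx⟩, hmem⟩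
  simp only [Set.mem_iInter] at hmem
  choose ξ hξ hxz using hmem
  -- the noise component of each ξ j
  set u : ∀ j, Fin (nv j) → ℝ := fun j k => ξ j (Sum.inl k) with hu
  -- key computation: C j *ᵥ x = (y j - cv j) + Gv j *ᵥ u j
  have hinv : ∀ j, C j * (V1 j * (Sg j)⁻¹ * (P1 j)ᵀ) = 1 := by
    intro j
    have e1 : (V1 j)ᵀ * (V1 j * ((Sg j)⁻¹ * (P1 j)ᵀ)) = (Sg j)⁻¹ * (P1 j)ᵀ := by
      rw [← Matrix.mul_assoc, hV1, one_mul]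
    calc C j * (V1 j * (Sg j)⁻¹ * (P1 j)ᵀ)
        = P1 j * (Sg j * ((V1 j)ᵀ * (V1 j * ((Sg j)⁻¹ * (P1 j)ᵀ)))) := by
          rw [hC]; simp only [Matrix.mul_assoc]
      _ = P1 j * (Sg j * ((Sg j)⁻¹ * (P1 j)ᵀ)) := by rw [e1]
      _ = P1 j * (Sg j * (Sg j)⁻¹ * (P1 j)ᵀ) := by rw [Matrix.mul_assoc]
      _ = 1 := by rw [Matrix.mul_nonsing_inv _ (hSg j), one_mul, hP1']
  have hCV2 : ∀ j, C j * V2 j = 0 := by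
    intro j
    rw [hC, Matrix.mul_assoc, hV12, Matrix.mul_zero]
  have hξsum : ∀ j, ξ j = Sum.elim (u j) (fun k => ξ j (Sum.inr k)) := by
    intro j; funext a; cases a <;> rfl
  have hCx : ∀ j, C j *ᵥ x = (y j - cv j) + Gv j *ᵥ u j := by
    intro j
    rw [hxz j, hcxy j, hGxy j, Matrix.mulVec_add, Matrix.mulVec_mulVec, hinv j,
      Matrix.one_mulVec, Matrix.mulVec_mulVec, Matrix.mul_fromCols,
      ← Matrix.mul_assoc, hinv j, Matrix.one_mul, Matrix.mul_smul, hCV2, smul_zero,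
      hξsum j, Matrix.fromCols_mulVec_sumElim, Matrix.zero_mulVec, add_zero]
  refine ⟨Sum.elim ξc (fun a => -(u a.1 a.2)), ξb, ?_, hξb, ?_, ?_⟩
  · rintro (i | a)
    · simpa using hξc i
    · simp only [Sum.elim_inr, abs_neg]
      exact hξ a.1 (Sum.inl a.2)
  · rw [Matrix.fromCols_mulVec_sumElim, Matrix.zero_mulVec, add_zero]
    exact hcon
  · rw [Matrix.fromCols_mulVec_sumElim]
    have hσ : (Matrix.of fun i (a : (j : Fin q) × Fin (nv j)) => -((lam a.1 * Gv a.1) i a.2))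
        *ᵥ (fun a : (j : Fin q) × Fin (nv j) => -(u a.1 a.2))
        = ∑ j, lam j *ᵥ (Gv j *ᵥ u j) := by
      rw [sigma_mulVec nv (fun j => lam j * Gv j) (fun a => -(u a.1 a.2))]
      have e : ∀ j, (lam j * Gv j) *ᵥ (fun k => -(u j k)) = -(lam j *ᵥ (Gv j *ᵥ u j)) := by
        intro j
        rw [show (fun k => -(u j k)) = -(u j) from rfl, Matrix.mulVec_neg,
          Matrix.mulVec_mulVec]
      simp [e]
    rw [hσ]
    set S := ∑ j, lam j * C j with hS
    have hSx : ∀ v : Fin n → ℝ, S *ᵥ v = ∑ j, lam j *ᵥ (C j *ᵥ v) := by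
      intro v
      rw [hS, sum_mulVec']
      simp [Matrix.mulVec_mulVec]
    have h1 : ∀ v, (1 - S) *ᵥ v = v - ∑ j, lam j *ᵥ (C j *ᵥ v) := by
      intro v
      rw [Matrix.sub_mulVec, Matrix.one_mulVec, hSx]
    rw [← Matrix.mulVec_mulVec, ← Matrix.mulVec_mulVec, h1, h1]
    have hsplit : ∀ j, lam j *ᵥ (y j - C j *ᵥ c - cv j)
        = lam j *ᵥ (y j - cv j) - lam j *ᵥ (C j *ᵥ c) := by
      intro j
      rw [← Matrix.mulVec_sub]
      congr 1
      abel
    have hCxj : ∀ j, lam j *ᵥ (C j *ᵥ x) = lam j *ᵥ (y j - cv j) + lam j *ᵥ (Gv j *ᵥ u j) := by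
      intro j
      rw [hCx j, Matrix.mulVec_add]
    calc x = (Gc *ᵥ ξc + Gb *ᵥ ξb + c) := hx
      _ = (Gc *ᵥ ξc - ∑ j, lam j *ᵥ (C j *ᵥ (Gc *ᵥ ξc))
            + ∑ j, lam j *ᵥ (Gv j *ᵥ u j))
          + (Gb *ᵥ ξb - ∑ j, lam j *ᵥ (C j *ᵥ (Gb *ᵥ ξb)))
          + (c + ∑ j, lam j *ᵥ (y j - C j *ᵥ c - cv j)) := by
        have hxsum : ∑ j, lam j *ᵥ (C j *ᵥ x)
            = ∑ j, lam j *ᵥ (y j - cv j) + ∑ j, lam j *ᵥ (Gv j *ᵥ u j) := by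
          rw [← Finset.sum_add_distrib]
          exact Finset.sum_congr rfl fun j _ => hCxj j
        have hxdecomp : ∑ j, lam j *ᵥ (C j *ᵥ x)
            = ∑ j, lam j *ᵥ (C j *ᵥ (Gc *ᵥ ξc)) + ∑ j, lam j *ᵥ (C j *ᵥ (Gb *ᵥ ξb))
              + ∑ j, lam j *ᵥ (C j *ᵥ c) := by
          rw [← Finset.sum_add_distrib, ← Finset.sum_add_distrib]
          refine Finset.sum_congr rfl fun j _ => ?_
          rw [hx, Matrix.mulVec_add, Matrix.mulVec_add, Matrix.mulVec_add, Matrix.mulVec_add]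
        have hsum2 : ∑ j, lam j *ᵥ (y j - C j *ᵥ c - cv j)
            = ∑ j, lam j *ᵥ (y j - cv j) - ∑ j, lam j *ᵥ (C j *ᵥ c) := by
          rw [← Finset.sum_sub_distrib]
          exact Finset.sum_congr rfl fun j _ => hsplit j
        rw [hsum2]
        have := hxsum.symm.trans hxdecomp
        -- this : ∑ λ(y-cv) + ∑ λ(Gv u) = ∑ λCGcξc + ∑ λCGbξb + ∑ λCc
        abel_nf
        abel_nf at this
        linear_combination (norm := abel) - this
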